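/- Every instance of house allocation with existing tenants under dichotomous preferences admits an allocation that is simultaneously individually rational, Pareto optimal, and maximizes the number of satisfied agents among all allocations. -/

import Mathlib

/-- An instance of house allocation with existing tenants under dichotomous
preferences: an endowment function `ω` assigning each agent at most one house
(no house owned by two distinct agents), and for each agent `i` a set `A i`
of acceptable houses. -/
structure HAInstance (N H : Type*) where
  ω : N → Option H
  A : N → Set H
  ω_inj : ∀ i j : N, ∀ h : H, ω i = some h → ω j = some h → i = j

/-- An allocation assigns each agent at most one house, no two distinct agents
receiving the same house. -/
def IsAllocation {N H : Type*} (x : N → Option H) : Prop :=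
  ∀ i j : N, ∀ h : H, x i = some h → x j = some h → i = j

/-- Agent `i` is satisfied by `x` if he receives an acceptable house. -/
def Satisfied {N H : Type*} (M : HAInstance N H) (x : N → Option H) (i : N) : Prop :=
  ∃ h : H, x i = some h ∧ h ∈ M.A i

/-- The welfare of an allocation: the number of satisfied agents. -/
noncomputable def Welfare {N H : Type*} (M : HAInstance N H) (x : N → Option H) : ℕ :=
  Nat.card {i : N // Satisfied M x i}

/-- Individual rationality: every agent whose endowed house is acceptable to
him receives an acceptable house. -/
def IR {N H : Type*} (M : HAInstance N H) (x : N → Option H) : Prop :=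
  ∀ i : N, (∃ h : H, M.ω i = some h ∧ h ∈ M.A i) → Satisfied M x i

/-- Strong individual rationality: every agent either keeps his endowment or
receives an acceptable house while his endowment was unacceptable. -/
def SIR {N H : Type*} (M : HAInstance N H) (x : N → Option H) : Prop :=
  ∀ i : N, x i = M.ω i ∨
    (Satisfied M x i ∧ ¬ (∃ h : H, M.ω i = some h ∧ h ∈ M.A i))

/-- Coalition `S` blocks allocation `x`: there is an injective assignment `y`
on `S`, using only houses endowed by members of `S`, such that every member of
`S` gets an acceptable house under `y` while unsatisfied under `x`. -/
def Blocks {N H : Type*} (M : HAInstance N H) (x : N → Option H) (S : Set N) : Prop :=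
  S.Nonempty ∧ ∃ y : N → H, Set.InjOn y S ∧
    ∀ i ∈ S, (∃ j ∈ S, M.ω j = some (y i)) ∧ y i ∈ M.A i ∧ ¬ Satisfied M x i

/-- An allocation is core stable if no coalition blocks it. -/
def CoreStable {N H : Type*} (M : HAInstance N H) (x : N → Option H) : Prop :=
  ∀ S : Set N, ¬ Blocks M x S

/-- `y` Pareto dominates `x` if every agent satisfied by `x` is satisfied by
`y` and some agent is satisfied by `y` but not by `x`. -/
def ParetoDominates {N H : Type*} (M : HAInstance N H) (y x : N → Option H) : Prop :=
  (∀ i : N, Satisfied M x i → Satisfied M y i) ∧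
    ∃ i : N, Satisfied M y i ∧ ¬ Satisfied M x i

/-!
Welfare maximality already gives Pareto optimality, so only individual rationality needs an
argument. Among the welfare-maximizing allocations take one maximizing the set of agents who are
satisfied with their own house. If some agent `i` with an acceptable endowment `h` were
unsatisfied, hand `h` to `i` and give `i`'s current house to whoever held `h`: at most that one
agent stops being satisfied while `i` becomes satisfied, so welfare does not drop, yet one more
agent is now satisfied with their own house.
-/

open Set

theorem exists_max_of_forall_le {α : Type*} {p : α → Prop} (f : α → ℕ) {B : ℕ}
    (hB : ∀ a, p a → f a ≤ B) (hp : ∃ a, p a) : ∃ a, p a ∧ ∀ b, p b → f b ≤ f a := by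
  obtain ⟨_, ⟨a, ha, rfl⟩, hmax⟩ := BddAbove.exists_isGreatest_of_nonempty
    (S := f '' {a | p a}) ⟨B, by rintro _ ⟨a, ha, rfl⟩; exact hB a ha⟩ (Nonempty.image f hp)
  exact ⟨a, ha, fun b hb => hmax ⟨b, hb, rfl⟩⟩

theorem Set.ncard_le_ncard_of_diff_subset {α : Type*} [Finite α] {s t J : Set α} {i : α}
    (hJ : J.Subsingleton) (hst : s \ J ⊆ t) (hit : i ∈ t) (his : i ∉ s) :
    s.ncard ≤ t.ncard := by
  rcases hJ.eq_empty_or_singleton with rfl | ⟨j, rfl⟩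
  · exact ncard_le_ncard (by simpa using hst)
  · calc s.ncard ≤ (insert j t \ {i}).ncard := ncard_le_ncard fun k hk =>
          ⟨(em (k = j)).elim Or.inl fun hkj => Or.inr (hst ⟨hk, hkj⟩),
            fun hki => his (hki ▸ hk)⟩
      _ = (insert j t).ncard - 1 := ncard_sdiff_singleton_of_mem (mem_insert_of_mem j hit)
      _ ≤ t.ncard := by have := ncard_insert_le j t; omega

section Reassign

variable {N H : Type*} [DecidableEq N] [DecidableEq H]

def reassign (x : N → Option H) (i : N) (h : H) : N → Option H :=
  fun k => if k = i then some h else if x k = some h then x i else x k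

variable {x : N → Option H} {i k : N} {h : H}

theorem reassign_self : reassign x i h i = some h := if_pos rfl

theorem reassign_of_ne (hki : k ≠ i) (hkh : x k ≠ some h) : reassign x i h k = x k := by
  simp [reassign, hki, hkh]

theorem IsAllocation.reassign (hx : IsAllocation x) (i : N) (h : H) :
    IsAllocation (reassign x i h) := by
  intro a b g ha hb
  unfold _root_.reassign at ha hb
  split_ifs at ha hb <;> grind [IsAllocation]

end Reassign

def keepers {N H : Type*} (M : HAInstance N H) (x : N → Option H) : Set N :=
  {i | Satisfied M x i ∧ x i = M.ω i}

section Welfare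

variable {N H : Type*} {M : HAInstance N H} {x y : N → Option H}

theorem keepers_ssubset_keepers_reassign [DecidableEq N] [DecidableEq H] {i : N} {h : H}
    (hω : M.ω i = some h) (hh : h ∈ M.A i) (hi : ¬ Satisfied M x i) :
    keepers M x ⊂ keepers M (reassign x i h) := by
  have hsub : keepers M x ⊆ keepers M (reassign x i h) := by
    rintro k ⟨hk, hkω⟩
    have hki : k ≠ i := fun hki => hi (hki ▸ hk)
    have hkh : x k ≠ some h := fun hkh => hki (M.ω_inj k i h (hkω ▸ hkh) hω)
    show Satisfied M (reassign x i h) k ∧ reassign x i h k = M.ω k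
    rw [Satisfied, reassign_of_ne hki hkh]
    exact ⟨hk, hkω⟩
  exact (ssubset_iff_of_subset hsub).2
    ⟨i, ⟨⟨h, reassign_self, hh⟩, reassign_self.trans hω.symm⟩, fun hik => hi hik.1⟩

variable [Finite N]

theorem welfare_le_card (x : N → Option H) : Welfare M x ≤ Nat.card N :=
  ncard_le_card _

theorem ParetoDominates.welfare_lt (hyx : ParetoDominates M y x) : Welfare M x < Welfare M y := by
  obtain ⟨hsub, i, hiy, hix⟩ := hyx
  exact ncard_lt_ncard ((ssubset_iff_of_subset hsub).2 ⟨i, hiy, hix⟩)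

theorem welfare_le_welfare_reassign [DecidableEq N] [DecidableEq H] {i : N} {h : H}
    (hx : IsAllocation x) (hi : ¬ Satisfied M x i) (hh : h ∈ M.A i) :
    Welfare M x ≤ Welfare M (reassign x i h) := by
  refine ncard_le_ncard_of_diff_subset (J := {k | x k = some h}) (i := i)
    (fun a ha b hb => hx a b h ha hb) ?_ ⟨h, reassign_self, hh⟩ hi
  rintro k ⟨hk : Satisfied M x k, hkh⟩
  have hki : k ≠ i := fun hki => hi (hki ▸ hk)
  show Satisfied M (reassign x i h) k
  rwa [Satisfied, reassign_of_ne hki hkh]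

end Welfare

theorem exists_ir_pareto_optimal_welfare_maximizing_general {N H : Type*}
    [Fintype N] (M : HAInstance N H) :
    ∃ x : N → Option H, IsAllocation x ∧ IR M x ∧
      (∀ y : N → Option H, IsAllocation y → ¬ ParetoDominates M y x) ∧
      ∀ y : N → Option H, IsAllocation y → Welfare M y ≤ Welfare M x := by
  classical
  obtain ⟨x₀, hx₀, hW₀⟩ := exists_max_of_forall_le (p := IsAllocation) (Welfare M)
    (fun y _ => welfare_le_card y)
    ⟨fun _ => none, fun _ _ _ h => by simp at h⟩
  obtain ⟨x, ⟨hx, hWx⟩, hK⟩ := exists_max_of_forall_le (fun y => (keepers M y).ncard)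
    (p := fun y => IsAllocation y ∧ Welfare M y = Welfare M x₀) (fun y _ => ncard_le_card _)
    ⟨x₀, hx₀, rfl⟩
  have hW : ∀ y, IsAllocation y → Welfare M y ≤ Welfare M x := hWx ▸ hW₀
  refine ⟨x, hx, ?_, fun y hy hyx => (hW y hy).not_gt hyx.welfare_lt, hW⟩
  rintro i ⟨h, hω, hh⟩
  by_contra hi
  have hx' := hx.reassign i h
  have hW' : Welfare M (reassign x i h) = Welfare M x₀ :=
    le_antisymm (hW₀ _ hx') (hWx ▸ welfare_le_welfare_reassign hx hi hh)
  exact (hK _ ⟨hx', hW'⟩).not_gt (ncard_lt_ncard (keepers_ssubset_keepers_reassign hω hh hi))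

/-- Every instance admits an allocation that is IR, Pareto
optimal, and welfare-maximizing among all allocations. -/
theorem exists_ir_pareto_optimal_welfare_maximizing {N H : Type*}
    [Fintype N] [Fintype H] (M : HAInstance N H) :
    ∃ x : N → Option H, IsAllocation x ∧ IR M x ∧
      (∀ y : N → Option H, IsAllocation y → ¬ ParetoDominates M y x) ∧
      ∀ y : N → Option H, IsAllocation y → Welfare M y ≤ Welfare M x :=
  exists_ir_pareto_optimal_welfare_maximizing_general M
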